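/- Let (X_n) be a nearest-neighbor path in Z^d with limsup_{n→∞} X_n·e_1/n > 0, and suppose that for every u > 0, limsup_{l→∞} limsup_{M→∞} #{0 ≤ m ≤ M_k : h_{m,l} ≤ u}/(M_k+1) = 0 along a suitable sequence (M_k). Then for each i ≥ 0, limsup_{k→∞} #{0 ≤ m ≤ M_k : h_{m,l_i} ≥ 6δ l_i}/(M_k+1) ≤ 1/3, where (l_i) is any increasing sequence and δ satisfies T_m ≤ 2δm for n_k/2 ≤ m ≤ n_k. This bound follows from the inequality Σ_{m=0}^{M_k}(T_{m+l_i} − T_m) ≤ l_i T_{M_k + l_i}. -/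

import Mathlib

open Filter

/-- first hitting time of level `i` (relative to the start of the path). -/
noncomputable def hitT (d : ℕ) (hd : 0 < d) (X : ℕ → Fin d → ℤ) (i : ℕ) : ℕ :=
  sInf {n : ℕ | X n ⟨0, hd⟩ = X 0 ⟨0, hd⟩ + (i : ℤ)}

/-- `h_{i,l}`: time between the first and the last visit to level `i`
before hitting level `i + l`. -/
noncomputable def smallh (d : ℕ) (hd : 0 < d) (X : ℕ → Fin d → ℤ) (i l : ℕ) : ℕ :=
  ((Finset.range (hitT d hd X (i + l))).filter
    (fun n => X n ⟨0, hd⟩ = X 0 ⟨0, hd⟩ + (i : ℤ))).sup id - hitT d hd X i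

/-- `#{0 ≤ m ≤ M : h_{m,l} ≤ u}` -/
noncomputable def cntLe (d : ℕ) (hd : 0 < d) (X : ℕ → Fin d → ℤ) (M l : ℕ) (u : ℝ) : ℕ :=
  (@Finset.filter _ (fun m => (smallh d hd X m l : ℝ) ≤ u)
    (Classical.decPred _) (Finset.range (M + 1))).card

/-- `#{0 ≤ m ≤ M : h_{m,l} ≥ u}` -/
noncomputable def cntGe (d : ℕ) (hd : 0 < d) (X : ℕ → Fin d → ℤ) (M l : ℕ) (u : ℝ) : ℕ :=
  (@Finset.filter _ (fun m => u ≤ (smallh d hd X m l : ℝ))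
    (Classical.decPred _) (Finset.range (M + 1))).card

section Aux

variable {d : ℕ} (hd : 0 < d) (X : ℕ → Fin d → ℤ)

lemma ivt_nat (g : ℕ → ℤ) (hg : ∀ n, |g (n + 1) - g n| ≤ 1) (c : ℤ) :
    ∀ N : ℕ, g 0 ≤ c → c ≤ g N → ∃ n ≤ N, g n = c := by
  intro N
  induction N with
  | zero => exact fun h0 hN => ⟨0, le_refl _, le_antisymm h0 hN⟩
  | succ N ih =>
    intro h0 hN
    by_cases h : c ≤ g N
    · obtain ⟨n, hn, hgn⟩ := ih h0 h
      exact ⟨n, hn.trans (Nat.le_succ N), hgn⟩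
    · push_neg at h
      have h1 := (abs_le.mp (hg N)).2
      exact ⟨N + 1, le_refl _, by omega⟩

lemma step_bound (hpath : ∀ n, ∑ j, |X (n + 1) j - X n j| = 1) (n : ℕ) :
    |X (n + 1) ⟨0, hd⟩ - X n ⟨0, hd⟩| ≤ 1 := by
  calc |X (n + 1) ⟨0, hd⟩ - X n ⟨0, hd⟩| ≤ ∑ j, |X (n + 1) j - X n j| :=
        Finset.single_le_sum (f := fun j => |X (n + 1) j - X n j|)
          (fun j _ => abs_nonneg _) (Finset.mem_univ _)
    _ = 1 := hpath n

lemma hit_nonempty (hpath : ∀ n, ∑ j, |X (n + 1) j - X n j| = 1)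
    (hlim : 0 < Filter.limsup
      (fun n : ℕ => ((X n ⟨0, hd⟩ - X 0 ⟨0, hd⟩ : ℤ) : ℝ) / (n : ℝ)) Filter.atTop)
    (i : ℕ) : {n : ℕ | X n ⟨0, hd⟩ = X 0 ⟨0, hd⟩ + (i : ℤ)}.Nonempty := by
  set g : ℕ → ℤ := fun n => X n ⟨0, hd⟩ - X 0 ⟨0, hd⟩ with hgdef
  have hstep : ∀ n, |g (n + 1) - g n| ≤ 1 := by
    intro n
    have := step_bound hd X hpath n
    simpa [hgdef, sub_sub_sub_cancel_right] using this
  have hbig : ∃ N, (i : ℤ) ≤ g N := by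
    by_contra hcon
    push_neg at hcon
    have habs : ∀ n, |g n| ≤ (n : ℤ) := by
      intro n
      induction n with
      | zero => simp [hgdef]
      | succ n ih =>
        calc |g (n + 1)| = |g n + (g (n + 1) - g n)| := by ring_nf
          _ ≤ |g n| + |g (n + 1) - g n| := abs_add_le _ _
          _ ≤ (n : ℤ) + 1 := add_le_add ih (hstep n)
          _ = ((n + 1 : ℕ) : ℤ) := by push_cast; ring
    set f : ℕ → ℝ := fun n => ((g n : ℤ) : ℝ) / (n : ℝ) with hfdef
    set L := Filter.limsup f Filter.atTop with hLdef
    have hco : IsCoboundedUnder (· ≤ ·) Filter.atTop f := by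
      apply isCoboundedUnder_le_of_le Filter.atTop (x := (-1 : ℝ))
      intro n
      rcases Nat.eq_zero_or_pos n with h | h
      · simp [hfdef, h]
      · have hn : (0 : ℝ) < n := by exact_mod_cast h
        rw [hfdef, le_div_iff₀ hn]
        have := (abs_le.mp (habs n)).1
        have : (-(n : ℝ)) ≤ ((g n : ℤ) : ℝ) := by exact_mod_cast this
        linarith
    have htend : Filter.Tendsto (fun n : ℕ => (i : ℝ) / n) Filter.atTop (nhds 0) :=
      tendsto_const_div_atTop_nhds_zero_nat _
    have hev : ∀ᶠ n in Filter.atTop, f n ≤ L / 2 := by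
      have h1 : ∀ᶠ n : ℕ in Filter.atTop, (i : ℝ) / n < L / 2 :=
        Filter.Tendsto.eventually_lt_const (f := fun n : ℕ => (i : ℝ) / n)
          (by linarith : (0 : ℝ) < L / 2) htend
      filter_upwards [h1, Filter.eventually_ge_atTop 1] with n hn1 hn2
      have hgn : ((g n : ℤ) : ℝ) ≤ (i : ℝ) := by exact_mod_cast (hcon n).le
      have hn0 : (0 : ℝ) ≤ (n : ℝ) := by positivity
      calc f n ≤ (i : ℝ) / n := by
            show ((g n : ℤ) : ℝ) / (n : ℝ) ≤ (i : ℝ) / n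
            gcongr
        _ ≤ L / 2 := hn1.le
    have := Filter.limsup_le_of_le hco hev
    rw [← hLdef] at this
    linarith
  obtain ⟨N, hN⟩ := hbig
  have h0 : g 0 ≤ (i : ℤ) := by simp [hgdef]
  obtain ⟨n, _, hn⟩ := ivt_nat g hstep (i : ℤ) N h0 hN
  exact ⟨n, by simpa [hgdef, sub_eq_iff_eq_add'] using hn⟩

end Aux

section Aux2

variable {d : ℕ} (hd : 0 < d) (X : ℕ → Fin d → ℤ)
    (hpath : ∀ n, ∑ j, |X (n + 1) j - X n j| = 1)
    (hlim : 0 < Filter.limsup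
      (fun n : ℕ => ((X n ⟨0, hd⟩ - X 0 ⟨0, hd⟩ : ℤ) : ℝ) / (n : ℝ)) Filter.atTop)

include hpath hlim

lemma hitT_spec (i : ℕ) : X (hitT d hd X i) ⟨0, hd⟩ = X 0 ⟨0, hd⟩ + (i : ℤ) :=
  Nat.sInf_mem (hit_nonempty hd X hpath hlim i)

lemma hitT_mono {m m' : ℕ} (h : m ≤ m') : hitT d hd X m ≤ hitT d hd X m' := by
  set g : ℕ → ℤ := fun n => X n ⟨0, hd⟩ - X 0 ⟨0, hd⟩ with hgdef
  have hstep : ∀ n, |g (n + 1) - g n| ≤ 1 := by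
    intro n
    have := step_bound hd X hpath n
    simpa [hgdef, sub_sub_sub_cancel_right] using this
  have hm' : g (hitT d hd X m') = (m' : ℤ) := by
    simp [hgdef, hitT_spec hd X hpath hlim m']
  obtain ⟨n, hn, hgn⟩ := ivt_nat g hstep (m : ℤ) (hitT d hd X m')
    (by simp [hgdef]) (by rw [hm']; exact_mod_cast h)
  refine le_trans (Nat.sInf_le ?_) hn
  simpa [hgdef, sub_eq_iff_eq_add'] using hgn

lemma smallh_le (m L : ℕ) :
    (smallh d hd X m L : ℝ) ≤ (hitT d hd X (m + L) : ℝ) - (hitT d hd X m : ℝ) := by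
  have hsup : ((Finset.range (hitT d hd X (m + L))).filter
      (fun n => X n ⟨0, hd⟩ = X 0 ⟨0, hd⟩ + (m : ℤ))).sup id ≤ hitT d hd X (m + L) :=
    Finset.sup_le fun b hb => (Finset.mem_range.mp (Finset.mem_filter.mp hb).1).le
  have h1 : smallh d hd X m L ≤ hitT d hd X (m + L) - hitT d hd X m :=
    Nat.sub_le_sub_right hsup _
  have h2 : hitT d hd X m ≤ hitT d hd X (m + L) :=
    hitT_mono hd X hpath hlim (Nat.le_add_right m L)
  calc (smallh d hd X m L : ℝ) ≤ ((hitT d hd X (m + L) - hitT d hd X m : ℕ) : ℝ) := by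
        exact_mod_cast h1
    _ = (hitT d hd X (m + L) : ℝ) - (hitT d hd X m : ℝ) := by
        rw [Nat.cast_sub h2]

end Aux2

lemma telescope_le (t : ℕ → ℝ) (ht : Monotone t) (h0 : 0 ≤ t 0) (M L : ℕ) (hLM : L ≤ M + 1) :
    ∑ m ∈ Finset.range (M + 1), (t (m + L) - t m) ≤ (L : ℝ) * t (M + L) := by
  rw [Finset.sum_sub_distrib]
  have e1 : ∑ m ∈ Finset.range (M + 1), t (m + L)
      = ∑ j ∈ Finset.Ico L (M + 1 + L), t j := by
    rw [Finset.sum_Ico_eq_sum_range]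
    simp only [Nat.add_sub_cancel]
    exact Finset.sum_congr rfl fun m _ => by rw [Nat.add_comm]
  have e2 : ∑ m ∈ Finset.range (M + 1), t m = ∑ j ∈ Finset.Ico 0 (M + 1), t j := by
    rw [Finset.range_eq_Ico]
  have s1 : ∑ j ∈ Finset.Ico L (M + 1), t j + ∑ j ∈ Finset.Ico (M + 1) (M + 1 + L), t j
      = ∑ j ∈ Finset.Ico L (M + 1 + L), t j :=
    Finset.sum_Ico_consecutive t hLM (Nat.le_add_right _ _)
  have s2 : ∑ j ∈ Finset.Ico 0 L, t j + ∑ j ∈ Finset.Ico L (M + 1), t j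
      = ∑ j ∈ Finset.Ico 0 (M + 1), t j :=
    Finset.sum_Ico_consecutive t (Nat.zero_le _) hLM
  have hb : ∑ j ∈ Finset.Ico (M + 1) (M + 1 + L), t j ≤ (L : ℝ) * t (M + L) := by
    have := Finset.sum_le_card_nsmul (Finset.Ico (M + 1) (M + 1 + L)) t (t (M + L))
      (fun j hj => ht (by have := (Finset.mem_Ico.mp hj).2; omega))
    simpa [Nat.add_sub_cancel_left, nsmul_eq_mul] using this
  have hnn : 0 ≤ ∑ j ∈ Finset.Ico 0 L, t j :=
    Finset.sum_nonneg fun j _ => h0.trans (ht (Nat.zero_le j))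
  rw [e1, e2, ← s1, ← s2]
  linarith

/-- under the stated hypotheses, for each `i`,
`limsup_k #{0 ≤ m ≤ M_k : h_{m,l_i} ≥ 6δ l_i}/(M_k+1) ≤ 1/3`, where `M_k = ⌈n_k/2⌉`. -/
theorem stmt2 (d : ℕ) (hd : 0 < d) (X : ℕ → Fin d → ℤ)
    (hpath : ∀ n, ∑ j, |X (n + 1) j - X n j| = 1)
    (hlim : 0 < Filter.limsup
      (fun n : ℕ => ((X n ⟨0, hd⟩ - X 0 ⟨0, hd⟩ : ℤ) : ℝ) / (n : ℝ)) Filter.atTop)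
    (δ : ℝ) (hδ : 0 < δ) (nk : ℕ → ℕ) (hnk : StrictMono nk)
    -- `T_{n_k} < δ n_k` and the consequence `T_m ≤ 2δ m` for `n_k/2 ≤ m ≤ n_k`
    (hTnk : ∀ k, (hitT d hd X (nk k) : ℝ) < δ * nk k)
    (hT : ∀ k m : ℕ, nk k ≤ 2 * m → m ≤ nk k → (hitT d hd X m : ℝ) ≤ 2 * δ * m)
    (l : ℕ → ℕ) (hlmono : StrictMono l) (hl1 : ∀ i, 1 ≤ l i)
    -- hypothesis: for every u > 0,
    -- limsup_{l→∞} limsup_{k→∞} #{0 ≤ m ≤ M_k : h_{m,l} ≤ u}/(M_k+1) = 0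
    (hvanish : ∀ u : ℝ, 0 < u →
      Filter.limsup (fun l' : ℕ =>
        Filter.limsup (fun k : ℕ =>
          (cntLe d hd X ((nk k + 1) / 2) l' u : ℝ) / (((nk k + 1) / 2 : ℕ) + 1 : ℝ))
          Filter.atTop) Filter.atTop = 0) :
    ∀ i : ℕ,
      Filter.limsup (fun k : ℕ =>
        (cntGe d hd X ((nk k + 1) / 2) (l i) (6 * δ * l i) : ℝ) /
          (((nk k + 1) / 2 : ℕ) + 1 : ℝ)) Filter.atTop ≤ 1 / 3 := by
  intro i
  set li : ℕ := l i with hli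
  have hli1 : 1 ≤ li := hl1 i
  set M : ℕ → ℕ := fun k => (nk k + 1) / 2 with hM
  set t : ℕ → ℝ := fun m => (hitT d hd X m : ℝ) with ht
  have htmono : Monotone t := fun m m' h =>
    Nat.cast_le.mpr (hitT_mono hd X hpath hlim h)
  have ht0 : 0 ≤ t 0 := Nat.cast_nonneg _
  set a : ℕ → ℝ := fun k =>
    (cntGe d hd X (M k) li (6 * δ * li) : ℝ) / ((M k : ℕ) + 1 : ℝ) with ha
  set b : ℕ → ℝ := fun k => 1 / 3 + (li : ℝ) / ((M k : ℝ) + 1) with hb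
  have hMpos : ∀ k, (0 : ℝ) < (M k : ℝ) + 1 := fun k => by positivity
  -- eventually a ≤ b
  have hab : ∀ᶠ k in Filter.atTop, a k ≤ b k := by
    filter_upwards [Filter.eventually_ge_atTop (2 * li)] with k hk
    have hnkk : k ≤ nk k := hnk.le_apply
    have h1 : M k + li ≤ nk k := by simp only [hM]; omega
    have h2 : nk k ≤ 2 * (M k + li) := by simp only [hM]; omega
    have hTb : t (M k + li) ≤ 2 * δ * ((M k : ℝ) + (li : ℝ)) := by
      have h := hT k (M k + li) h2 h1
      push_cast at h
      exact h
    -- counting inequality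
    set S := (@Finset.filter _ (fun m => 6 * δ * li ≤ (smallh d hd X m li : ℝ))
      (Classical.decPred _) (Finset.range (M k + 1))) with hS
    have hcard : (cntGe d hd X (M k) li (6 * δ * li) : ℝ) = (S.card : ℝ) := by
      rw [cntGe]
    have key : (S.card : ℝ) * (6 * δ * li) ≤ (li : ℝ) * t (M k + li) := by
      calc (S.card : ℝ) * (6 * δ * li) = ∑ _m ∈ S, 6 * δ * (li : ℝ) := by
            rw [Finset.sum_const, nsmul_eq_mul]
        _ ≤ ∑ m ∈ S, (t (m + li) - t m) := by
            refine Finset.sum_le_sum fun m hm => ?_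
            have hmem := (Finset.mem_filter.mp hm).2
            exact hmem.trans (smallh_le hd X hpath hlim m li)
        _ ≤ ∑ m ∈ Finset.range (M k + 1), (t (m + li) - t m) := by
            refine Finset.sum_le_sum_of_subset_of_nonneg (Finset.filter_subset _ _)
              fun m _ _ => ?_
            have := htmono (Nat.le_add_right m li)
            linarith
        _ ≤ (li : ℝ) * t (M k + li) :=
            telescope_le t htmono ht0 (M k) li (by simp only [hM]; omega)
    have hlipos : (0 : ℝ) < li := by exact_mod_cast hli1
    have hC : (S.card : ℝ) ≤ ((M k : ℝ) + li) / 3 := by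
      have h3 : (S.card : ℝ) * (6 * δ * li) ≤ (li : ℝ) * (2 * δ * (M k + li)) := by
        calc (S.card : ℝ) * (6 * δ * li) ≤ (li : ℝ) * t (M k + li) := key
          _ ≤ (li : ℝ) * (2 * δ * (M k + li)) := by
              exact mul_le_mul_of_nonneg_left hTb hlipos.le
      nlinarith [mul_pos hδ hlipos]
    show (cntGe d hd X (M k) li (6 * δ * li) : ℝ) / ((M k : ℕ) + 1 : ℝ)
      ≤ 1 / 3 + (li : ℝ) / ((M k : ℝ) + 1)
    rw [hcard, div_le_iff₀ (hMpos k)]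
    have hx : (1 / 3 + (li : ℝ) / ((M k : ℝ) + 1)) * ((M k : ℝ) + 1)
        = ((M k : ℝ) + 1) / 3 + li := by
      field_simp
    rw [hx]
    calc (S.card : ℝ) ≤ ((M k : ℝ) + li) / 3 := hC
      _ ≤ ((M k : ℝ) + 1) / 3 + li := by
          have : (1 : ℝ) ≤ li := by exact_mod_cast hli1
          linarith
  -- b tends to 1/3
  have hMtend : Filter.Tendsto (fun k => ((M k : ℝ) + 1)) Filter.atTop Filter.atTop := by
    have h1 : Filter.Tendsto M Filter.atTop Filter.atTop := by
      refine Filter.tendsto_atTop_atTop.mpr fun c => ⟨2 * c, fun k hk => ?_⟩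
      have := hnk.le_apply (x := k)
      simp only [hM]; omega
    exact Filter.tendsto_atTop_add_const_right _ _
      ((tendsto_natCast_atTop_atTop (R := ℝ)).comp h1)
  have hbtend : Filter.Tendsto b Filter.atTop (nhds (1 / 3)) := by
    have h2 : Filter.Tendsto (fun k => (li : ℝ) / ((M k : ℝ) + 1)) Filter.atTop (nhds 0) :=
      Filter.Tendsto.div_atTop tendsto_const_nhds hMtend
    rw [hb]
    have h3 : Filter.Tendsto (fun k => (1 / 3 : ℝ) + (li : ℝ) / ((M k : ℝ) + 1))
        Filter.atTop (nhds (1 / 3 + 0)) := Filter.Tendsto.add tendsto_const_nhds h2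
    simpa using h3
  have hco : Filter.IsCoboundedUnder (· ≤ ·) Filter.atTop a :=
    isCoboundedUnder_le_of_le Filter.atTop fun k => by
      rw [ha]; positivity
  have hbd : Filter.IsBoundedUnder (· ≤ ·) Filter.atTop b :=
    hbtend.isBoundedUnder_le
  calc Filter.limsup a Filter.atTop ≤ Filter.limsup b Filter.atTop :=
        Filter.limsup_le_limsup hab hco hbd
    _ = 1 / 3 := hbtend.limsup_eq
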